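/- arXiv:2008.05456 — 7 statements merged into one kernel-verified Lean document; each statement's English description precedes it below -/
import Mathlib

section
/- Let G be a compact connected Lie group with maximal torus T, and let f : G → G be a conjugation-equivariant diffeomorphism. Then the restriction of f to T is a diffeomorphism of T that is equivariant under the action of the Weyl group N(T)/T. -/
/-! A conjugation-equivariant map sends an element commuting with `s` to an element commuting
with `s`, so it preserves the centralizer of any set; a maximal torus is its own centralizer.
The inverse of an equivariant bijection is again equivariant, so both directions preserve `T`. -/

section ConjEquivariant

variable {G : Type*} [Group G]

theorem mapsTo_centralizer_of_conj_equivariant {g : G → G}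
    (hg : ∀ W X : G, g (X * W * X⁻¹) = X * g W * X⁻¹) (s : Set G) :
    Set.MapsTo g (Subgroup.centralizer s) (Subgroup.centralizer s) := by
  intro x hx
  rw [SetLike.mem_coe, Subgroup.mem_centralizer_iff] at hx ⊢
  intro y hy
  have hconj : y * x * y⁻¹ = x := by rw [hx y hy, mul_inv_cancel_right]
  have hconj_image : y * g x * y⁻¹ = g x := by rw [← hg, hconj]
  exact mul_inv_eq_iff_eq_mul.mp hconj_image

theorem Equiv.symm_conj_equivariant (e : G ≃ G)
    (he : ∀ W X : G, e (X * W * X⁻¹) = X * e W * X⁻¹) (W X : G) :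
    e.symm (X * W * X⁻¹) = X * e.symm W * X⁻¹ :=
  e.symm_apply_eq.mpr <| by rw [he, e.apply_symm_apply]

theorem Equiv.bijOn_centralizer_of_conj_equivariant (e : G ≃ G)
    (he : ∀ W X : G, e (X * W * X⁻¹) = X * e W * X⁻¹) (s : Set G) :
    Set.BijOn e (Subgroup.centralizer s) (Subgroup.centralizer s) :=
  e.bijOn' (mapsTo_centralizer_of_conj_equivariant he s)
    (mapsTo_centralizer_of_conj_equivariant (e.symm_conj_equivariant he) s)

end ConjEquivariant

theorem conj_equivariant_restricts_to_weyl_equivariant_diffeo_of_torus_general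
    {G : Type*} [Group G] [TopologicalSpace G]
    (T : Subgroup G)
    (hT : Subgroup.centralizer (T : Set G) = T)
    (f : G ≃ₜ G)
    (hequiv : ∀ W X : G, f (X * W * X⁻¹) = X * f W * X⁻¹) :
    Set.BijOn f (T : Set G) (T : Set G) ∧
      ∀ X ∈ Subgroup.normalizer (T : Set G), ∀ D ∈ T, f (X * D * X⁻¹) = X * f D * X⁻¹ := by
  have hbij := f.toEquiv.bijOn_centralizer_of_conj_equivariant hequiv T
  rw [hT] at hbij
  exact ⟨hbij, fun X _ D _ => hequiv D X⟩

/-- Let `G` be a compact connected Lie group with maximal torus `T`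
(`T` equals its own centralizer, and is connected), and let `f : G → G` be a
conjugation-equivariant diffeomorphism (here: homeomorphism).  Then the
restriction of `f` to `T` is a bijection of `T` onto itself that is equivariant
under the conjugation action of the normalizer `N(T)` (hence of the Weyl group
`N(T)/T`). -/
theorem conj_equivariant_restricts_to_weyl_equivariant_diffeo_of_torus
    {G : Type*} [Group G] [TopologicalSpace G] [IsTopologicalGroup G]
    [CompactSpace G] [ConnectedSpace G]
    (T : Subgroup G)
    (hT : Subgroup.centralizer (T : Set G) = T)
    (hTconn : IsConnected (T : Set G))
    (f : G ≃ₜ G)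
    (hequiv : ∀ W X : G, f (X * W * X⁻¹) = X * f W * X⁻¹) :
    Set.BijOn f (T : Set G) (T : Set G) ∧
      ∀ X ∈ Subgroup.normalizer (T : Set G), ∀ D ∈ T, f (X * D * X⁻¹) = X * f D * X⁻¹ :=
  conj_equivariant_restricts_to_weyl_equivariant_diffeo_of_torus_general T hT f hequiv
end

section
/- Let U ∈ U(N) be a unitary matrix, and let f : T → T be a map on the diagonal unitary matrices that is equivariant under permutation of diagonal entries. If D ∈ T commutes with a matrix A ∈ U(N), then A also commutes with f(D). -/
/-!
A matrix `A` commutes with `diagonal d` exactly when `d i = d j` wherever `A i j ≠ 0`. If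
`D i i = D j j`, conjugation by the transposition `(i j)` fixes `D`, so equivariance forces
`f D i i = f D j j`; hence `f D` satisfies the same constraints as `D` and commutes with `A`.
-/

open Matrix

theorem Equiv.Perm.permMatrix_mul_mul_star {n R : Type*} [Fintype n] [DecidableEq n]
    [NonAssocSemiring R] [StarRing R] (σ : Equiv.Perm n) (M : Matrix n n R) :
    σ.permMatrix R * M * star (σ.permMatrix R) = M.submatrix σ σ := by
  rw [star_eq_conjTranspose, conjTranspose_permMatrix, Equiv.Perm.permMatrix,
    Equiv.Perm.permMatrix, PEquiv.toMatrix_toPEquiv_mul, PEquiv.mul_toMatrix_toPEquiv]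
  rfl

theorem Function.comp_swap_of_apply_eq {α β : Type*} [DecidableEq α] {f : α → β} {i j : α}
    (h : f i = f j) : f ∘ Equiv.swap i j = f := by
  rw [Equiv.comp_swap_eq_update, h, Function.update_eq_self, ← h, Function.update_eq_self]

namespace Matrix

variable {n R : Type*} [Fintype n] [DecidableEq n]

theorem apply_eq_of_commute_diagonal [CommSemiring R] [IsCancelMulZero R] {A : Matrix n n R}
    {d : n → R} (h : Commute A (diagonal d)) {i j : n} (hij : A i j ≠ 0) : d i = d j := by
  have hentry := congrFun (congrFun h.eq i) j
  rw [mul_diagonal, diagonal_mul, mul_comm] at hentry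
  exact (mul_right_cancel₀ hij hentry).symm

theorem commute_diagonal_of_commute_diagonal [CommSemiring R] [IsCancelMulZero R]
    {A : Matrix n n R} {d e : n → R} (h : Commute A (diagonal d))
    (hde : ∀ i j, d i = d j → e i = e j) : Commute A (diagonal e) := by
  ext i j
  rw [mul_diagonal, diagonal_mul]
  by_cases hij : A i j = 0
  · simp [hij]
  · rw [hde i j (apply_eq_of_commute_diagonal h hij), mul_comm]

theorem IsDiag.apply_eq_of_swap_equivariant [NonAssocSemiring R] [StarRing R]
    (f : Matrix n n R → Matrix n n R) {D : Matrix n n R} (hD : D.IsDiag) {i j : n}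
    (hf : f ((Equiv.swap i j).permMatrix R * D * star ((Equiv.swap i j).permMatrix R)) =
      (Equiv.swap i j).permMatrix R * f D * star ((Equiv.swap i j).permMatrix R))
    (hij : D i i = D j j) : f D i i = f D j j := by
  have hfix : (Equiv.swap i j).permMatrix R * D * star ((Equiv.swap i j).permMatrix R) = D := by
    rw [Equiv.Perm.permMatrix_mul_mul_star, ← hD.diagonal_diag, submatrix_diagonal_equiv,
      Function.comp_swap_of_apply_eq hij]
  rw [hfix, Equiv.Perm.permMatrix_mul_mul_star] at hf
  simpa using congrFun (congrFun hf i) i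

end Matrix

theorem commutes_with_image_of_perm_equivariant_general
    {N : ℕ} (f : Matrix (Fin N) (Fin N) ℂ → Matrix (Fin N) (Fin N) ℂ)
    (hfT : ∀ D : Matrix (Fin N) (Fin N) ℂ, D.IsDiag → D ∈ Matrix.unitaryGroup (Fin N) ℂ →
      (f D).IsDiag ∧ f D ∈ Matrix.unitaryGroup (Fin N) ℂ)
    (hequiv : ∀ (σ : Equiv.Perm (Fin N)) (D : Matrix (Fin N) (Fin N) ℂ),
      D.IsDiag → D ∈ Matrix.unitaryGroup (Fin N) ℂ →
      f (σ.permMatrix ℂ * D * star (σ.permMatrix ℂ)) =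
        σ.permMatrix ℂ * f D * star (σ.permMatrix ℂ))
    (D A : Matrix (Fin N) (Fin N) ℂ)
    (hD : D.IsDiag) (hDu : D ∈ Matrix.unitaryGroup (Fin N) ℂ)
    (hcomm : A * D = D * A) :
    A * f D = f D * A := by
  have hcomm' : Commute A (diagonal D.diag) := by rwa [hD.diagonal_diag]
  rw [← (hfT D hD hDu).1.diagonal_diag]
  exact commute_diagonal_of_commute_diagonal hcomm' fun i j hij =>
    hD.apply_eq_of_swap_equivariant f (hequiv _ D hD hDu) hij

/-- Let `T` be the subgroup of diagonal matrices in `U(N)` and let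
`f : T → T` (here: a map on matrices sending diagonal unitaries to diagonal
unitaries) be equivariant under permutation of the diagonal entries,
implemented by conjugation with permutation matrices.  If a diagonal unitary
`D` commutes with a unitary matrix `A`, then `A` also commutes with `f D`. -/
theorem commutes_with_image_of_perm_equivariant
    {N : ℕ} (f : Matrix (Fin N) (Fin N) ℂ → Matrix (Fin N) (Fin N) ℂ)
    (hfT : ∀ D : Matrix (Fin N) (Fin N) ℂ, D.IsDiag → D ∈ Matrix.unitaryGroup (Fin N) ℂ →
      (f D).IsDiag ∧ f D ∈ Matrix.unitaryGroup (Fin N) ℂ)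
    (hequiv : ∀ (σ : Equiv.Perm (Fin N)) (D : Matrix (Fin N) (Fin N) ℂ),
      D.IsDiag → D ∈ Matrix.unitaryGroup (Fin N) ℂ →
      f (σ.permMatrix ℂ * D * star (σ.permMatrix ℂ)) =
        σ.permMatrix ℂ * f D * star (σ.permMatrix ℂ))
    (D A : Matrix (Fin N) (Fin N) ℂ)
    (hD : D.IsDiag) (hDu : D ∈ Matrix.unitaryGroup (Fin N) ℂ)
    (hA : A ∈ Matrix.unitaryGroup (Fin N) ℂ)
    (hcomm : A * D = D * A) :
    A * f D = f D * A :=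
  commutes_with_image_of_perm_equivariant_general f hfT hequiv D A hD hDu hcomm
end

section
/- Let f : T → T be a Weyl-group-equivariant map on the diagonal subgroup T of U(N) (or SU(N)). If a matrix W has two diagonalizations W = XDX⁻¹ = YEY⁻¹ with D, E ∈ T and X, Y ∈ G, then X f(D) X⁻¹ = Y f(E) Y⁻¹. Hence f extends to a well-defined conjugation-equivariant map F on all of G, and F is invertible whenever f is. -/
/-!
If `Z D Z⋆ = E` with `Z` unitary and `D, E` diagonal, then `D` and `E` have the same
characteristic polynomial, so `E = P D P⋆` for a permutation matrix `P`. The unitary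
`P⋆ Z` then commutes with `D`, hence preserves its eigenspaces; by equivariance under the
transposition swapping two equal eigenvalues, `f D` is constant on each eigenspace of `D`,
so `P⋆ Z` also commutes with `f D`. Therefore `Z f(D) Z⋆ = P f(D) P⋆ = f(P D P⋆) = f(E)`,
which is the well-definedness of `F`. Equivariance of `F` is then immediate, and when `f`
is a bijection of `T` its inverse is again equivariant and extends to the inverse of `F`.
-/

open Matrix Function Set Equiv Polynomial

theorem Equiv.Perm.exists_comp_eq_of_map_univ_eq {n α : Type*} [Fintype n] [DecidableEq α]
    {d e : n → α} (h : Finset.univ.val.map d = Finset.univ.val.map e) :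
    ∃ σ : Perm n, d ∘ σ = e := by
  classical
  have hcard : ∀ a, Fintype.card {i // e i = a} = Fintype.card {i // d i = a} := fun a => by
    simpa [Fintype.card_subtype, Multiset.count_map, eq_comm, ← Finset.filter_val] using
      (congrArg (Multiset.count a) h).symm
  exact ⟨ofFiberEquiv fun a => Fintype.equivOfCardEq (hcard a), funext (ofFiberEquiv_map _)⟩

variable {n K : Type*} [Fintype n] [DecidableEq n]

theorem Matrix.commute_diagonal_of_commute_diagonal_s3 [CommRing K] [NoZeroDivisors K]
    {U : Matrix n n K} {d a : n → K} (hda : ∀ i j, d i = d j → a i = a j)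
    (h : Commute U (diagonal d)) : Commute U (diagonal a) := by
  ext i j
  have hij := congrFun (congrFun h.eq i) j
  simp only [mul_diagonal, diagonal_mul] at hij ⊢
  by_cases hd : d i = d j
  · rw [hda i j hd, mul_comm]
  · have hU : U i j = 0 := by
      by_contra hU
      exact hd (mul_left_cancel₀ hU (hij.trans (mul_comm _ _))).symm
    simp [hU]

section CommRing

variable [CommRing K] [StarRing K]

theorem Matrix.permMatrix_mem_unitaryGroup (σ : Perm n) :
    σ.permMatrix K ∈ unitaryGroup n K := by
  rw [mem_unitaryGroup_iff, star_eq_conjTranspose, conjTranspose_permMatrix, ← permMatrix_mul,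
    inv_mul_cancel, permMatrix_one]

theorem Matrix.permMatrix_mul_diagonal_mul_star (σ : Perm n) (d : n → K) :
    σ.permMatrix K * diagonal d * star (σ.permMatrix K) = diagonal (d ∘ σ) := by
  rw [star_eq_conjTranspose, conjTranspose_permMatrix]
  simp only [Perm.permMatrix]
  rw [PEquiv.toMatrix_toPEquiv_mul, PEquiv.mul_toMatrix_toPEquiv, submatrix_submatrix,
    comp_id, id_comp]
  exact submatrix_diagonal_equiv d σ

/-- The maximal torus `T`. -/
def diagonalUnitary (n K : Type*) [Fintype n] [DecidableEq n] [CommRing K] [StarRing K] :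
    Set (Matrix n n K) :=
  {D | D.IsDiag ∧ D ∈ unitaryGroup n K}

theorem permMatrix_conj_mem_diagonalUnitary (σ : Perm n) {D : Matrix n n K}
    (hD : D ∈ diagonalUnitary n K) :
    σ.permMatrix K * D * star (σ.permMatrix K) ∈ diagonalUnitary n K := by
  have hP := permMatrix_mem_unitaryGroup (K := K) σ
  refine ⟨?_, mul_mem (mul_mem hP hD.2) (Unitary.star_mem hP)⟩
  rw [← hD.1.diagonal_diag, permMatrix_mul_diagonal_mul_star]
  exact isDiag_diagonal _

/-- Equivariance under the Weyl group of `T`. -/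
def IsPermEquivariant (f : Matrix n n K → Matrix n n K) : Prop :=
  ∀ σ : Perm n, ∀ D ∈ diagonalUnitary n K,
    f (σ.permMatrix K * D * star (σ.permMatrix K)) =
      σ.permMatrix K * f D * star (σ.permMatrix K)

namespace IsPermEquivariant

variable {f : Matrix n n K → Matrix n n K}

theorem apply_diag_eq (hf : MapsTo f (diagonalUnitary n K) (diagonalUnitary n K))
    (he : IsPermEquivariant f) {D : Matrix n n K} (hD : D ∈ diagonalUnitary n K) {i j : n}
    (hij : D i i = D j j) : f D i i = f D j j := by
  have hswap : (swap i j).permMatrix K * D * star ((swap i j).permMatrix K) = D := by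
    rw [← hD.1.diagonal_diag, permMatrix_mul_diagonal_mul_star]
    congr 1
    ext k
    rcases eq_or_ne k i with rfl | hki
    · simpa using hij.symm
    rcases eq_or_ne k j with rfl | hkj
    · simpa using hij
    · simp [swap_apply_of_ne_of_ne hki hkj]
  have h := he (swap i j) D hD
  rw [hswap, ← (hf hD).1.diagonal_diag, permMatrix_mul_diagonal_mul_star] at h
  simpa using congrFun (congrFun h i) i

theorem commute_apply [NoZeroDivisors K]
    (hf : MapsTo f (diagonalUnitary n K) (diagonalUnitary n K)) (he : IsPermEquivariant f)
    {D U : Matrix n n K} (hD : D ∈ diagonalUnitary n K) (hUD : Commute U D) :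
    Commute U (f D) := by
  rw [← hD.1.diagonal_diag] at hUD
  rw [← (hf hD).1.diagonal_diag]
  exact commute_diagonal_of_commute_diagonal_s3 (fun i j => he.apply_diag_eq hf hD) hUD

theorem of_rightInvOn (he : IsPermEquivariant f) {g : Matrix n n K → Matrix n n K}
    (hg : MapsTo g (diagonalUnitary n K) (diagonalUnitary n K))
    (hfg : RightInvOn g f (diagonalUnitary n K)) (hinj : InjOn f (diagonalUnitary n K)) :
    IsPermEquivariant g := by
  intro σ D hD
  apply hinj (hg (permMatrix_conj_mem_diagonalUnitary σ hD))
    (permMatrix_conj_mem_diagonalUnitary σ (hg hD))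
  rw [hfg (permMatrix_conj_mem_diagonalUnitary σ hD), he σ _ (hg hD), hfg hD]

end IsPermEquivariant

def conjApply (g : Matrix n n K → Matrix n n K) (p : unitaryGroup n K × diagonalUnitary n K) :
    Matrix n n K :=
  p.1 * g p.2 * star (p.1 : Matrix n n K)

/-- A matrix with no unitary diagonalization is sent to itself. -/
noncomputable def conjExtension (f : Matrix n n K → Matrix n n K) :
    Matrix n n K → Matrix n n K :=
  extend (conjApply id) (conjApply f) id

variable {f : Matrix n n K → Matrix n n K}

theorem conjExtension_of_not_exists {W : Matrix n n K} (hW : ¬∃ p, conjApply id p = W) :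
    conjExtension f W = W :=
  extend_apply' _ _ _ hW

theorem mapsTo_conjExtension (hf : MapsTo f (diagonalUnitary n K) (diagonalUnitary n K)) :
    MapsTo (conjExtension f) (unitaryGroup n K) (unitaryGroup n K) := by
  intro W hW
  by_cases h : ∃ p, conjApply id p = W
  · classical
    rw [conjExtension, extend_def, dif_pos h]
    set p := h.choose
    exact mul_mem (mul_mem p.1.2 (hf p.2.2).2) (Unitary.star_mem p.1.2)
  · rwa [conjExtension_of_not_exists h]

end CommRing

section Domain

variable [CommRing K] [IsDomain K] [StarRing K]

theorem Matrix.exists_perm_of_unitary_conj_diagonal {Z : Matrix n n K}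
    (hZ : Z ∈ unitaryGroup n K) {d e : n → K} (h : Z * diagonal d * star Z = diagonal e) :
    ∃ σ : Perm n, d ∘ σ = e := by
  have hcharpoly : (diagonal d).charpoly = (diagonal e).charpoly := by
    rw [← h, charpoly_mul_comm, ← mul_assoc, Unitary.star_mul_self_of_mem hZ, one_mul]
  have hroots (v : n → K) : (diagonal v).charpoly.roots = Finset.univ.val.map v := by
    rw [charpoly_diagonal, Finset.prod_eq_multiset_prod]
    simpa [Multiset.map_map, comp_def] using roots_multiset_prod_X_sub_C (Finset.univ.val.map v)
  classical
  apply Perm.exists_comp_eq_of_map_univ_eq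
  rw [← hroots, ← hroots, hcharpoly]

namespace IsPermEquivariant

variable {f : Matrix n n K → Matrix n n K}
  (hf : MapsTo f (diagonalUnitary n K) (diagonalUnitary n K)) (he : IsPermEquivariant f)
include hf he

theorem apply_unitary_conj {Z D : Matrix n n K} (hZ : Z ∈ unitaryGroup n K)
    (hD : D ∈ diagonalUnitary n K) (hZD : Z * D * star Z ∈ diagonalUnitary n K) :
    f (Z * D * star Z) = Z * f D * star Z := by
  generalize h : Z * D * star Z = E at hZD ⊢
  obtain ⟨σ, hσ⟩ := exists_perm_of_unitary_conj_diagonal hZ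
    (d := D.diag) (e := E.diag) (by rw [hD.1.diagonal_diag, hZD.1.diagonal_diag, h])
  set P := σ.permMatrix K
  have hP : P ∈ unitaryGroup n K := permMatrix_mem_unitaryGroup σ
  have hPD : P * D * star P = E := by
    rw [← hD.1.diagonal_diag, permMatrix_mul_diagonal_mul_star, hσ, hZD.1.diagonal_diag]
  have hU : star P * Z ∈ unitaryGroup n K := mul_mem (Unitary.star_mem hP) hZ
  have hUD : Commute (star P * Z) D := by
    rw [commute_unitary_iff_star_right_conjugate hU, star_mul, star_star]
    calc star P * Z * D * (star Z * P) = star P * (Z * D * star Z) * P := by simp only [mul_assoc]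
      _ = star P * P * D * (star P * P) := by rw [h, ← hPD]; simp only [mul_assoc]
      _ = D := by rw [Unitary.star_mul_self_of_mem hP, one_mul, mul_one]
  have hUfD := (commute_unitary_iff_star_right_conjugate hU).1 (he.commute_apply hf hD hUD)
  calc f E = P * f D * star P := by rw [← hPD, he σ D hD]
    _ = P * (star P * Z * f D * star (star P * Z)) * star P := by rw [hUfD]
    _ = Z * f D * star Z := by simp [mul_assoc, ← mul_assoc P, Unitary.mul_star_self_of_mem hP]

theorem conj_apply_eq_of_conj_eq {X Y D E : Matrix n n K} (hX : X ∈ unitaryGroup n K)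
    (hY : Y ∈ unitaryGroup n K) (hD : D ∈ diagonalUnitary n K) (hE : E ∈ diagonalUnitary n K)
    (h : X * D * star X = Y * E * star Y) : X * f D * star X = Y * f E * star Y := by
  have hYX : star Y * X ∈ unitaryGroup n K := mul_mem (Unitary.star_mem hY) hX
  have hYXD : star Y * X * D * star (star Y * X) = E := by
    calc star Y * X * D * star (star Y * X) = star Y * (X * D * star X) * Y := by
          simp only [star_mul, star_star, mul_assoc]
      _ = star Y * Y * E * (star Y * Y) := by rw [h]; simp only [mul_assoc]
      _ = E := by rw [Unitary.star_mul_self_of_mem hY, one_mul, mul_one]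
  calc X * f D * star X = Y * (star Y * X * f D * star (star Y * X)) * star Y := by
        simp [mul_assoc, ← mul_assoc Y, Unitary.mul_star_self_of_mem hY]
    _ = Y * f E * star Y := by
        rw [← he.apply_unitary_conj hf hYX hD (hYXD ▸ hE), hYXD]

theorem factorsThrough : (conjApply f).FactorsThrough (conjApply id) :=
  fun p q h => he.conj_apply_eq_of_conj_eq hf p.1.2 q.1.2 p.2.2 q.2.2 h

end IsPermEquivariant

variable {f : Matrix n n K → Matrix n n K}

theorem conjExtension_unitary_conj_diagonal
    (hf : MapsTo f (diagonalUnitary n K) (diagonalUnitary n K)) (he : IsPermEquivariant f)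
    {X D : Matrix n n K} (hX : X ∈ unitaryGroup n K) (hD : D ∈ diagonalUnitary n K) :
    conjExtension f (X * D * star X) = X * f D * star X :=
  (he.factorsThrough hf).extend_apply id (⟨X, hX⟩, ⟨D, hD⟩)

theorem conjExtension_unitary_conj
    (hf : MapsTo f (diagonalUnitary n K) (diagonalUnitary n K)) (he : IsPermEquivariant f)
    {X : Matrix n n K} (hX : X ∈ unitaryGroup n K) (W : Matrix n n K) :
    conjExtension f (X * W * star X) = X * conjExtension f W * star X := by
  by_cases hW : ∃ p, conjApply id p = W
  · obtain ⟨⟨Y, D⟩, rfl⟩ := hW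
    have hXY : X * (Y * D * star (Y : Matrix n n K)) * star X = X * Y * D * star (X * Y) := by
      simp only [star_mul, mul_assoc]
    rw [conjApply, id, hXY, conjExtension_unitary_conj_diagonal hf he (mul_mem hX Y.2) D.2,
      conjExtension_unitary_conj_diagonal hf he Y.2 D.2]
    simp only [star_mul, mul_assoc]
  · have hXW : ¬∃ p, conjApply id p = X * W * star X := by
      rintro ⟨⟨Y, D⟩, hYD⟩
      refine hW ⟨(⟨star X * Y, mul_mem (Unitary.star_mem hX) Y.2⟩, D), ?_⟩
      calc star X * Y * D * star (star X * Y) = star X * (Y * D * star (Y : Matrix n n K)) * X := by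
            simp only [star_mul, star_star, mul_assoc]
        _ = star X * (X * W * star X) * X := by rw [← hYD]; rfl
        _ = W := by simp [mul_assoc, ← mul_assoc (star X), Unitary.star_mul_self_of_mem hX]
    rw [conjExtension_of_not_exists hW, conjExtension_of_not_exists hXW]

theorem leftInverse_conjExtension
    (hf : MapsTo f (diagonalUnitary n K) (diagonalUnitary n K)) (he : IsPermEquivariant f)
    {g : Matrix n n K → Matrix n n K} (hg : MapsTo g (diagonalUnitary n K) (diagonalUnitary n K))
    (hge : IsPermEquivariant g) (hgf : LeftInvOn g f (diagonalUnitary n K)) :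
    LeftInverse (conjExtension g) (conjExtension f) := by
  intro W
  by_cases hW : ∃ p, conjApply id p = W
  · obtain ⟨⟨X, D⟩, rfl⟩ := hW
    rw [conjApply, id, conjExtension_unitary_conj_diagonal hf he X.2 D.2,
      conjExtension_unitary_conj_diagonal hg hge X.2 (hf D.2), hgf D.2]
  · rw [conjExtension_of_not_exists hW, conjExtension_of_not_exists hW]

theorem bijOn_conjExtension (hf : BijOn f (diagonalUnitary n K) (diagonalUnitary n K))
    (he : IsPermEquivariant f) :
    BijOn (conjExtension f) (unitaryGroup n K) (unitaryGroup n K) := by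
  have hinv : InvOn (invFunOn f (diagonalUnitary n K)) f _ _ := hf.invOn_invFunOn
  have hg := (hf.symm hinv.symm).mapsTo
  have hge := he.of_rightInvOn hg hinv.2 hf.injOn
  refine InvOn.bijOn ⟨?_, ?_⟩ (mapsTo_conjExtension hf.mapsTo) (mapsTo_conjExtension hg)
  · exact (leftInverse_conjExtension hf.mapsTo he hg hge hinv.1).leftInvOn _
  · exact (leftInverse_conjExtension hg hge hf.mapsTo he hinv.2).leftInvOn _

end Domain

/-- Let `T` be the diagonal subgroup of `U(N)` and let `f : T → T`
be equivariant under the Weyl group (permutation of diagonal entries,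
implemented by conjugation with permutation matrices).  If `W = X D X⁻¹ = Y E Y⁻¹`
are two diagonalizations of the same matrix (with `X, Y` unitary and `D, E`
diagonal unitary), then `X f(D) X⁻¹ = Y f(E) Y⁻¹`.  Hence `f` extends to a
well-defined map `F` on all of `U(N)` satisfying `F (X D X⁻¹) = X f(D) X⁻¹`,
which is conjugation-equivariant, and which is a bijection of `U(N)` whenever
`f` is a bijection of `T`. -/
theorem perm_equivariant_extends_to_conj_equivariant
    {N : ℕ} (f : Matrix (Fin N) (Fin N) ℂ → Matrix (Fin N) (Fin N) ℂ)
    (hfT : ∀ D : Matrix (Fin N) (Fin N) ℂ, D.IsDiag → D ∈ Matrix.unitaryGroup (Fin N) ℂ →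
      (f D).IsDiag ∧ f D ∈ Matrix.unitaryGroup (Fin N) ℂ)
    (hequiv : ∀ (σ : Equiv.Perm (Fin N)) (D : Matrix (Fin N) (Fin N) ℂ),
      D.IsDiag → D ∈ Matrix.unitaryGroup (Fin N) ℂ →
      f (σ.permMatrix ℂ * D * star (σ.permMatrix ℂ)) =
        σ.permMatrix ℂ * f D * star (σ.permMatrix ℂ)) :
    (∀ X Y D E : Matrix (Fin N) (Fin N) ℂ,
      X ∈ Matrix.unitaryGroup (Fin N) ℂ → Y ∈ Matrix.unitaryGroup (Fin N) ℂ →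
      D.IsDiag → D ∈ Matrix.unitaryGroup (Fin N) ℂ →
      E.IsDiag → E ∈ Matrix.unitaryGroup (Fin N) ℂ →
      X * D * star X = Y * E * star Y →
      X * f D * star X = Y * f E * star Y)
    ∧ ∃ F : Matrix (Fin N) (Fin N) ℂ → Matrix (Fin N) (Fin N) ℂ,
        (∀ X D : Matrix (Fin N) (Fin N) ℂ,
          X ∈ Matrix.unitaryGroup (Fin N) ℂ →
          D.IsDiag → D ∈ Matrix.unitaryGroup (Fin N) ℂ →
          F (X * D * star X) = X * f D * star X) ∧
        (∀ W X : Matrix (Fin N) (Fin N) ℂ,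
          W ∈ Matrix.unitaryGroup (Fin N) ℂ → X ∈ Matrix.unitaryGroup (Fin N) ℂ →
          F (X * W * star X) = X * F W * star X) ∧
        (Set.BijOn f {D | D.IsDiag ∧ D ∈ Matrix.unitaryGroup (Fin N) ℂ}
            {D | D.IsDiag ∧ D ∈ Matrix.unitaryGroup (Fin N) ℂ} →
          Set.BijOn F (Matrix.unitaryGroup (Fin N) ℂ : Set (Matrix (Fin N) (Fin N) ℂ))
            (Matrix.unitaryGroup (Fin N) ℂ : Set (Matrix (Fin N) (Fin N) ℂ))) := by
  have hf : MapsTo f (diagonalUnitary (Fin N) ℂ) (diagonalUnitary (Fin N) ℂ) :=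
    fun D hD => hfT D hD.1 hD.2
  have he : IsPermEquivariant f := fun σ D hD => hequiv σ D hD.1 hD.2
  exact ⟨fun X Y D E hX hY hD hDu hE hEu h =>
      he.conj_apply_eq_of_conj_eq hf hX hY ⟨hD, hDu⟩ ⟨hE, hEu⟩ h,
    conjExtension f,
    fun X D hX hD hDu => conjExtension_unitary_conj_diagonal hf he hX ⟨hD, hDu⟩,
    fun W X _ hX => conjExtension_unitary_conj hf he hX W,
    fun hbij => bijOn_conjExtension hbij he⟩
end

section
/- The N points y_1, …, y_N in ℝ^N defined by (y_k)_j = 2π(k/N − δ_{k ≥ j}) all lie in the hyperplane {θ ∈ ℝ^N : Σ_j θ_j = 0}, and their convex hull Ψ is an (N−1)-simplex whose image under θ ↦ diag(e^{iθ_1}, …, e^{iθ_N}) is a cell in the maximal torus of SU(N): every point in the boundary of Ψ maps to a matrix with a repeated eigenvalue, and every point in the interior of Ψ maps to a matrix with N distinct eigenvalues. -/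
open Complex Real

/-- Vertices of the canonical cell: `(y_k)_j = 2π (k/N − δ_{k ≥ j})`
(with `k, j` running over `1, …, N`, here implemented zero-based). -/
noncomputable def canonVertex (N : ℕ) (k j : Fin N) : ℝ :=
  2 * Real.pi * (((k : ℕ) + 1 : ℝ) / N - if (j : ℕ) ≤ (k : ℕ) then 1 else 0)

/-!
For `θ = ∑ₖ wₖ yₖ` and `i ≤ j` the gap `θⱼ - θᵢ` is `2π ∑_{i ≤ k < j} wₖ`: consecutive
coordinates differ by `2π wₖ`, and `θ_{N-1} - θ₀ = 2π (∑ₖ wₖ - w_{N-1})`. On the boundary of `Ψ`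
one of these gaps is `0` or `2π`, so two eigenvalues `e^{iθ}` coincide; in the interior every
gap `θⱼ - θᵢ` with `i < j` lies strictly between `0` and `2π`. For weights with `∑ₖ wₖ = 0`
and `∑ₖ wₖ yₖ = 0` the same gaps force every `wₖ = 0`, which is affine independence.
-/

open Finset

variable {N : ℕ}

lemma sum_canonVertex (k : Fin N) : ∑ j, canonVertex N k j = 0 := by
  have hN : (N : ℝ) ≠ 0 := Nat.cast_ne_zero.2 k.pos.ne'
  simp only [canonVertex, ← mul_sum, sum_sub_distrib, sum_const, card_univ, Fintype.card_fin,
    nsmul_eq_mul, sum_boole, ← Fin.le_iff_val_le_val, filter_ge_eq_Iic, Fin.card_Iic]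
  field_simp
  push_cast
  ring

lemma canonVertex_sub_canonVertex {i j : Fin N} (hij : i ≤ j) (k : Fin N) :
    canonVertex N k j - canonVertex N k i = if k ∈ Ico i j then 2 * π else 0 := by
  simp only [canonVertex, mem_Ico, Fin.le_iff_val_le_val, Fin.lt_def] at hij ⊢
  split_ifs <;> first | ring1 | (exfalso; omega)

lemma sum_mul_canonVertex_sub (w : Fin N → ℝ) {i j : Fin N} (hij : i ≤ j) :
    ∑ k, w k * canonVertex N k j - ∑ k, w k * canonVertex N k i
      = 2 * π * ∑ k ∈ Ico i j, w k := by
  simp only [← sum_sub_distrib, ← mul_sub, canonVertex_sub_canonVertex hij, mul_ite, mul_zero,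
    sum_ite_mem, univ_inter, ← sum_mul]
  ring

lemma sum_mul_canonVertex_succ_sub (w : Fin N → ℝ) {e e' : Fin N} (he : (e' : ℕ) = e + 1) :
    ∑ k, w k * canonVertex N k e' - ∑ k, w k * canonVertex N k e = 2 * π * w e := by
  have hIco : Ico e e' = {e} := by
    ext k
    simp only [mem_Ico, mem_singleton, Fin.le_iff_val_le_val, Fin.lt_def, Fin.ext_iff]
    omega
  rw [sum_mul_canonVertex_sub w (Fin.le_iff_val_le_val.2 (by omega)), hIco, sum_singleton]

lemma sum_mul_canonVertex_sub_zero (w : Fin N → ℝ) {i j : Fin N} (hi : (i : ℕ) = 0)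
    (hj : (j : ℕ) + 1 = N) :
    ∑ k, w k * canonVertex N k j - ∑ k, w k * canonVertex N k i = 2 * π * (∑ k, w k - w j) := by
  have hIco : Ico i j = univ.erase j := by
    ext k
    simp only [mem_Ico, mem_erase, mem_univ, and_true, Fin.le_iff_val_le_val,
      Fin.lt_def, ne_eq, Fin.ext_iff]
    omega
  rw [sum_mul_canonVertex_sub w (Fin.le_iff_val_le_val.2 (by omega)), hIco,
    sum_erase_eq_sub (mem_univ j)]

lemma exp_mul_I_ne_of_lt_of_lt {x y : ℝ} (hxy : x < y) (hyx : y < x + 2 * π) :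
    cexp (x * I) ≠ cexp (y * I) := by
  rw [← Circle.coe_exp, ← Circle.coe_exp, Ne, Circle.coe_inj]
  exact fun h => hxy.ne <| Circle.exp_injOn_Ico (a := x) (b := x + 2 * π) (by simp)
    ⟨le_rfl, by linarith [pi_pos]⟩ ⟨hxy.le, hyx⟩ h

theorem affineIndependent_canonVertex :
    AffineIndependent ℝ (fun k : Fin N => (canonVertex N k : Fin N → ℝ)) := by
  rw [affineIndependent_iff_of_fintype]
  intro w hw hcomb e
  rw [weightedVSub_eq_linear_combination _ hw] at hcomb
  have hθ (j : Fin N) : ∑ k, w k * canonVertex N k j = 0 := by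
    simpa using congrFun hcomb j
  have h2π : 2 * π ≠ 0 := by positivity
  by_cases he : (e : ℕ) + 1 < N
  · have hgap := sum_mul_canonVertex_succ_sub w (e' := ⟨e + 1, he⟩) rfl
    rw [hθ, hθ, sub_zero, eq_comm, mul_eq_zero] at hgap
    exact hgap.resolve_left h2π
  · have hgap := sum_mul_canonVertex_sub_zero w (i := ⟨0, e.pos⟩) (j := e) rfl (by omega)
    rw [hθ, hθ, hw, sub_zero, zero_sub, eq_comm, mul_eq_zero, neg_eq_zero] at hgap
    exact hgap.resolve_left h2π

theorem exists_exp_sum_mul_canonVertex_eq_of_eq_zero (γ : Fin N → ℝ) (hγ : ∑ k, γ k = 1)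
    {e : Fin N} (he : γ e = 0) :
    ∃ i j : Fin N, i ≠ j ∧ cexp ((∑ k, γ k * canonVertex N k i : ℝ) * I)
      = cexp ((∑ k, γ k * canonVertex N k j : ℝ) * I) := by
  by_cases hlast : (e : ℕ) + 1 < N
  · have hgap := sum_mul_canonVertex_succ_sub γ (e' := ⟨e + 1, hlast⟩) rfl
    rw [he, mul_zero, sub_eq_zero] at hgap
    exact ⟨e, ⟨e + 1, hlast⟩, by simp [Fin.ext_iff], by rw [hgap]⟩
  · have hgap := sum_mul_canonVertex_sub_zero γ (i := ⟨0, e.pos⟩) (j := e) rfl (by omega)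
    rw [hγ, he, sub_zero, mul_one, sub_eq_iff_eq_add'] at hgap
    refine ⟨⟨0, e.pos⟩, e, fun h0 => ?_, ?_⟩
    · rw [h0, left_eq_add] at hgap
      exact two_pi_pos.ne' hgap
    · rw [hgap, ← Circle.coe_exp, ← Circle.coe_exp, Circle.exp_add_two_pi]

theorem injective_exp_sum_mul_canonVertex (γ : Fin N → ℝ) (hγ0 : ∀ k, 0 < γ k)
    (hγ : ∑ k, γ k = 1) :
    Function.Injective fun j => cexp ((∑ k, γ k * canonVertex N k j : ℝ) * I) := by
  refine .of_lt_imp_ne fun i j hij => ?_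
  have hgap := sum_mul_canonVertex_sub γ hij.le
  have hpos : 0 < ∑ k ∈ Ico i j, γ k := sum_pos (fun k _ => hγ0 k) ⟨i, left_mem_Ico.2 hij⟩
  have hlt : ∑ k ∈ Ico i j, γ k < 1 := hγ ▸ sum_lt_sum_of_subset (subset_univ _) (mem_univ j)
    right_notMem_Ico (hγ0 j) fun k _ _ => (hγ0 k).le
  exact exp_mul_I_ne_of_lt_of_lt (by nlinarith [pi_pos]) (by nlinarith [pi_pos])

theorem canonVertex_defines_cell_general (N : ℕ) :
    (∀ k : Fin N, ∑ j : Fin N, canonVertex N k j = 0) ∧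
    AffineIndependent ℝ (fun k : Fin N => (canonVertex N k : Fin N → ℝ)) ∧
    (∀ γ : Fin N → ℝ, (∀ k, 0 ≤ γ k) → ∑ k, γ k = 1 → (∃ k, γ k = 0) →
      ∃ i j : Fin N, i ≠ j ∧
        Complex.exp ((∑ k, γ k * canonVertex N k i) * Complex.I) =
          Complex.exp ((∑ k, γ k * canonVertex N k j) * Complex.I)) ∧
    (∀ γ : Fin N → ℝ, (∀ k, 0 < γ k) → ∑ k, γ k = 1 →
      ∀ i j : Fin N, i ≠ j →
        Complex.exp ((∑ k, γ k * canonVertex N k i) * Complex.I) ≠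
          Complex.exp ((∑ k, γ k * canonVertex N k j) * Complex.I)) :=
  ⟨sum_canonVertex, affineIndependent_canonVertex,
    fun γ _ hγ ⟨_, he⟩ => exists_exp_sum_mul_canonVertex_eq_of_eq_zero γ hγ he,
    fun γ hγ0 hγ _ _ hij => (injective_exp_sum_mul_canonVertex γ hγ0 hγ).ne hij⟩

/-- The points `y_1, …, y_N` lie in the hyperplane `Σ θ = 0`, are
affinely independent (so their convex hull `Ψ` is an `(N−1)`-simplex), and the
image of `Ψ` under `θ ↦ diag(e^{iθ_1}, …, e^{iθ_N})` is a cell in the maximal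
torus of `SU(N)`: every boundary point of `Ψ` (some barycentric coordinate
`γ_k = 0`) maps to a matrix with a repeated eigenvalue, and every interior
point (all `γ_k > 0`) maps to a matrix with `N` distinct eigenvalues. -/
theorem canonVertex_defines_cell (N : ℕ) (hN : 2 ≤ N) :
    (∀ k : Fin N, ∑ j : Fin N, canonVertex N k j = 0) ∧
    AffineIndependent ℝ (fun k : Fin N => (canonVertex N k : Fin N → ℝ)) ∧
    (∀ γ : Fin N → ℝ, (∀ k, 0 ≤ γ k) → ∑ k, γ k = 1 → (∃ k, γ k = 0) →
      ∃ i j : Fin N, i ≠ j ∧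
        Complex.exp ((∑ k, γ k * canonVertex N k i) * Complex.I) =
          Complex.exp ((∑ k, γ k * canonVertex N k j) * Complex.I)) ∧
    (∀ γ : Fin N → ℝ, (∀ k, 0 < γ k) → ∑ k, γ k = 1 →
      ∀ i j : Fin N, i ≠ j →
        Complex.exp ((∑ k, γ k * canonVertex N k i) * Complex.I) ≠
          Complex.exp ((∑ k, γ k * canonVertex N k j) * Complex.I)) :=
  canonVertex_defines_cell_general N
end

section
/- The canonicalization algorithm maps any spectrum of an SU(N) matrix into the canonical simplex: given λ_1,…,λ_N on the unit circle with Π λ_k = 1, set θ_k = arg(λ_k) ∈ [0,2π), S = (1/2π)Σθ_k (an integer), sort the θ_k ascending, subtract 2π from the largest S of them, and sort again; the resulting vector θ^canon lies in the simplex Ψ with vertices (y_k)_j = 2π(k/N − δ_{k≥j}). Explicitly, setting γ_k = (θ^canon_{k+1} − θ^canon_k)/2π for k < N and γ_N = 1 − Σ_{k<N} γ_k, one has γ_k ≥ 0, Σγ_k = 1, and Σ_k γ_k y_k = θ^canon. -/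
/-!
Subtracting `2π` from the `S` largest angles makes the vector sum to zero while keeping every
entry within `2π` of every other, so after sorting, the gaps `θᶜ_{k+1} − θᶜ_k` and the closing gap
`θᶜ_1 + 2π − θᶜ_N` are nonnegative and add up to `2π`. The coordinates `γ_k` are these gaps
divided by `2π`; their tail sums `Σ_{k ≥ j} γ_k` telescope to `1 + (θᶜ_1 − θᶜ_j)/2π`, and
`Σ_k γ_k y_k` is a combination of these tails which collapses to `θᶜ` because `Σ θᶜ = 0`.
-/

open Real

open Finset

theorem Fin.sum_succ_sub_castSucc {M : Type*} [AddCommGroup M] {n : ℕ} (f : Fin (n + 1) → M) :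
    ∑ k : Fin n, (f k.succ - f k.castSucc) = f (Fin.last n) - f 0 := by
  induction n with
  | zero => simp
  | succ n ih =>
    rw [Fin.sum_univ_castSucc]
    simp_rw [Fin.succ_castSucc]
    rw [ih (fun k => f k.castSucc)]
    simp

theorem le_of_sum_eq_mul_of_forall_lt {n S : ℕ} {c : ℝ} (hc : 0 < c) {θ : Fin (n + 1) → ℝ}
    (hθ : ∀ k, θ k < c) (hS : ∑ k, θ k = c * S) : S ≤ n := by
  have hlt : c * S < c * (n + 1) :=
    calc c * S = ∑ k, θ k := hS.symm
      _ < ∑ _k : Fin (n + 1), c := sum_lt_sum_of_nonempty univ_nonempty fun k _ => hθ k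
      _ = c * (n + 1) := by simp [mul_comm]
  exact Nat.lt_succ_iff.mp (by exact_mod_cast lt_of_mul_lt_mul_left hlt hc.le)

theorem card_filter_sub_le_val {N S : ℕ} (hSN : S ≤ N) : #{k : Fin N | N - S ≤ (k : ℕ)} = S := by
  have h := card_filter_add_card_filter_not (s := (univ : Finset (Fin N)))
    (fun k : Fin N => (k : ℕ) < N - S)
  simp only [not_lt, Fin.card_filter_val_lt, card_univ, Fintype.card_fin] at h
  omega

theorem sum_sub_ite_eq_zero {N S : ℕ} (hSN : S ≤ N) {c : ℝ} {θ : Fin N → ℝ}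
    (hS : ∑ k, θ k = c * S) (σ : Equiv.Perm (Fin N)) :
    ∑ k, (θ (σ k) - if N - S ≤ (k : ℕ) then c else 0) = 0 := by
  rw [sum_sub_distrib, Equiv.sum_comp σ θ, hS, ← sum_filter, sum_const,
    card_filter_sub_le_val hSN, nsmul_eq_mul]
  ring

theorem sub_ite_le_sub_ite_add {N m : ℕ} {c : ℝ} {θ : Fin N → ℝ} (hθ : ∀ k, θ k ∈ Set.Ico 0 c)
    {σ : Equiv.Perm (Fin N)} (hσ : Monotone (θ ∘ σ)) (a b : Fin N) :
    θ (σ a) - (if m ≤ (a : ℕ) then c else 0) ≤ θ (σ b) - (if m ≤ (b : ℕ) then c else 0) + c := by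
  have ha := hθ (σ a)
  have hb := hθ (σ b)
  split_ifs with ha' hb' hb'
  · linarith [ha.2, hb.1]
  · linarith [ha.2, hb.1, hb.2]
  · have hab : θ (σ a) ≤ θ (σ b) := hσ (Fin.le_def.mpr (by omega))
    linarith
  · linarith [ha.2, hb.1]

theorem sum_mul_canonVertex {N : ℕ} (γ : Fin N → ℝ) (j : Fin N) :
    ∑ k, γ k * canonVertex N k j =
      2 * π / N * ∑ i, ∑ k ∈ Ici i, γ k - 2 * π * ∑ k ∈ Ici j, γ k := by
  have hweight : ∑ k, γ k * ((k : ℕ) + 1 : ℝ) = ∑ i, ∑ k ∈ Ici i, γ k := by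
    simp_rw [← Nat.cast_add_one, ← Fin.card_Iic, mul_comm (γ _), ← nsmul_eq_mul, ← sum_const]
    exact sum_comm' (by simp)
  have htail : ∑ k, γ k * (if (j : ℕ) ≤ (k : ℕ) then 1 else 0) = ∑ k ∈ Ici j, γ k := by
    simp_rw [mul_ite, mul_one, mul_zero, Fin.val_fin_le, ← sum_filter, filter_le_eq_Ici]
  simp_rw [canonVertex, mul_sub, sum_sub_distrib, ← htail, ← hweight, mul_sum]
  congr 1 <;> refine sum_congr rfl fun k _ => by ring

section SimplexCoords

variable {n : ℕ}

-- The value `x 0 + 2π` at `n + 1` turns the closing gap into an ordinary difference.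
noncomputable def extendByPeriod (x : Fin (n + 1) → ℝ) (i : ℕ) : ℝ :=
  if h : i < n + 1 then x ⟨i, h⟩ else x 0 + 2 * π

noncomputable def simplexCoords (x : Fin (n + 1) → ℝ) : Fin (n + 1) → ℝ :=
  Fin.snoc (fun k : Fin n => (x k.succ - x k.castSucc) / (2 * π))
    (1 - ∑ k : Fin n, (x k.succ - x k.castSucc) / (2 * π))

theorem extendByPeriod_of_lt {x : Fin (n + 1) → ℝ} {i : ℕ} (hi : i < n + 1) :
    extendByPeriod x i = x ⟨i, hi⟩ :=
  dif_pos hi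

theorem extendByPeriod_val (x : Fin (n + 1) → ℝ) (k : Fin (n + 1)) :
    extendByPeriod x k = x k :=
  extendByPeriod_of_lt k.isLt

theorem extendByPeriod_of_le {x : Fin (n + 1) → ℝ} {i : ℕ} (hi : n + 1 ≤ i) :
    extendByPeriod x i = x 0 + 2 * π := by
  simp [extendByPeriod, Nat.not_lt.mpr hi]

theorem monotone_extendByPeriod {x : Fin (n + 1) → ℝ} (hx : Monotone x)
    (hspread : x (Fin.last n) ≤ x 0 + 2 * π) : Monotone (extendByPeriod x) := by
  refine monotone_nat_of_le_succ fun i => ?_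
  rcases lt_trichotomy i n with hi | rfl | hi
  · rw [extendByPeriod_of_lt (by omega), extendByPeriod_of_lt (by omega)]
    exact hx (Fin.mk_le_mk.mpr i.le_succ)
  · rw [extendByPeriod_of_lt i.lt_succ_self, extendByPeriod_of_le le_rfl]
    exact hspread
  · rw [extendByPeriod_of_le hi, extendByPeriod_of_le (by omega)]

theorem simplexCoords_eq (x : Fin (n + 1) → ℝ) (k : Fin (n + 1)) :
    simplexCoords x k = (extendByPeriod x (k + 1) - extendByPeriod x k) / (2 * π) := by
  induction k using Fin.lastCases with
  | cast k =>
    rw [simplexCoords, Fin.snoc_castSucc, Fin.val_castSucc, ← Fin.val_succ, extendByPeriod_val,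
      ← Fin.val_castSucc, extendByPeriod_val]
  | last =>
    rw [simplexCoords, Fin.snoc_last, ← sum_div, Fin.sum_succ_sub_castSucc, extendByPeriod_val,
      extendByPeriod_of_le (by simp)]
    field_simp
    ring

theorem simplexCoords_nonneg {x : Fin (n + 1) → ℝ} (hx : Monotone x)
    (hspread : x (Fin.last n) ≤ x 0 + 2 * π) (k : Fin (n + 1)) : 0 ≤ simplexCoords x k := by
  rw [simplexCoords_eq]
  exact div_nonneg (sub_nonneg.mpr (monotone_extendByPeriod hx hspread k.val.le_succ))
    two_pi_pos.le

theorem sum_Ici_simplexCoords (x : Fin (n + 1) → ℝ) (j : Fin (n + 1)) :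
    ∑ k ∈ Ici j, simplexCoords x k = 1 + (x 0 - x j) / (2 * π) := by
  have hmap := sum_map (Ici j) Fin.valEmbedding
    fun i => extendByPeriod x (i + 1) - extendByPeriod x i
  simp only [Fin.map_valEmbedding_Ici, Fin.valEmbedding_apply] at hmap
  simp_rw [simplexCoords_eq, ← sum_div]
  rw [← hmap, sum_Ico_sub _ j.isLt.le, extendByPeriod_of_le le_rfl,
    extendByPeriod_val]
  field_simp
  ring

theorem sum_simplexCoords (x : Fin (n + 1) → ℝ) : ∑ k, simplexCoords x k = 1 := by
  simpa using sum_Ici_simplexCoords x 0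

theorem sum_simplexCoords_mul_canonVertex {x : Fin (n + 1) → ℝ} (hx : ∑ k, x k = 0)
    (j : Fin (n + 1)) : ∑ k, simplexCoords x k * canonVertex (n + 1) k j = x j := by
  rw [sum_mul_canonVertex]
  simp_rw [sum_Ici_simplexCoords, sum_add_distrib, ← sum_div, sum_sub_distrib, hx]
  simp only [sum_const, card_univ, Fintype.card_fin, nsmul_eq_mul]
  push_cast
  field_simp
  ring

end SimplexCoords

theorem canonicalization_lands_in_canonical_simplex_general
    (n : ℕ)
    (θ : Fin (n + 1) → ℝ)
    (hθmem : ∀ k, θ k ∈ Set.Ico (0 : ℝ) (2 * Real.pi))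
    (S : ℕ) (hS : ∑ k, θ k = 2 * Real.pi * S)
    (σ : Equiv.Perm (Fin (n + 1))) (hσ : Monotone (θ ∘ σ))
    (θsnap : Fin (n + 1) → ℝ)
    (hsnap : ∀ k : Fin (n + 1),
      θsnap k = θ (σ k) - if n + 1 - S ≤ (k : ℕ) then 2 * Real.pi else 0)
    (τ : Equiv.Perm (Fin (n + 1))) (hτ : Monotone (θsnap ∘ τ))
    (θc : Fin (n + 1) → ℝ) (hθc : θc = θsnap ∘ τ)
    (γ : Fin (n + 1) → ℝ)
    (hγ : γ = Fin.snoc (fun k : Fin n => (θc k.succ - θc k.castSucc) / (2 * Real.pi))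
      (1 - ∑ k : Fin n, (θc k.succ - θc k.castSucc) / (2 * Real.pi))) :
    (∀ k, 0 ≤ γ k) ∧ (∑ k, γ k = 1) ∧
      ∀ j : Fin (n + 1), ∑ k, γ k * canonVertex (n + 1) k j = θc j := by
  have hSn : S ≤ n := le_of_sum_eq_mul_of_forall_lt two_pi_pos (fun k => (hθmem k).2) hS
  have hmono : Monotone θc := hθc ▸ hτ
  have hsum : ∑ k, θc k = 0 := by
    rw [hθc]
    simp_rw [Function.comp_apply, Equiv.sum_comp τ θsnap, hsnap]
    exact sum_sub_ite_eq_zero (Nat.le_succ_of_le hSn) hS σ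
  have hspread : θc (Fin.last n) ≤ θc 0 + 2 * π := by
    simp only [hθc, Function.comp_apply, hsnap]
    exact sub_ite_le_sub_ite_add hθmem hσ _ _
  subst hγ
  exact ⟨simplexCoords_nonneg hmono hspread, sum_simplexCoords θc,
    sum_simplexCoords_mul_canonVertex hsum⟩

/-- The canonicalization algorithm maps any spectrum of an `SU(N)`
matrix into the canonical simplex.  Given `λ_1, …, λ_N` on the unit circle with
`Π λ_k = 1`, set `θ_k = arg λ_k ∈ [0, 2π)`, `S = (1/2π) Σ θ_k` (an integer),
sort the `θ_k` ascending (permutation `σ`), subtract `2π` from the largest `S`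
of them, and sort again (permutation `τ`); the resulting vector `θᶜ` lies in
the simplex `Ψ` with vertices `y_k`: setting
`γ_k = (θᶜ_{k+1} − θᶜ_k)/2π` for `k < N` and `γ_N = 1 − Σ_{k<N} γ_k`, one has
`γ_k ≥ 0`, `Σ γ_k = 1` and `Σ_k γ_k y_k = θᶜ`. -/
theorem canonicalization_lands_in_canonical_simplex
    (n : ℕ) (lam : Fin (n + 1) → ℂ)
    (hlam : ∀ k, ‖lam k‖ = 1) (hprod : ∏ k, lam k = 1)
    (θ : Fin (n + 1) → ℝ)
    (hθmem : ∀ k, θ k ∈ Set.Ico (0 : ℝ) (2 * Real.pi))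
    (hθarg : ∀ k, Complex.exp ((θ k : ℂ) * Complex.I) = lam k)
    (S : ℕ) (hS : ∑ k, θ k = 2 * Real.pi * S)
    (σ : Equiv.Perm (Fin (n + 1))) (hσ : Monotone (θ ∘ σ))
    (θsnap : Fin (n + 1) → ℝ)
    (hsnap : ∀ k : Fin (n + 1),
      θsnap k = θ (σ k) - if n + 1 - S ≤ (k : ℕ) then 2 * Real.pi else 0)
    (τ : Equiv.Perm (Fin (n + 1))) (hτ : Monotone (θsnap ∘ τ))
    (θc : Fin (n + 1) → ℝ) (hθc : θc = θsnap ∘ τ)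
    (γ : Fin (n + 1) → ℝ)
    (hγ : γ = Fin.snoc (fun k : Fin n => (θc k.succ - θc k.castSucc) / (2 * Real.pi))
      (1 - ∑ k : Fin n, (θc k.succ - θc k.castSucc) / (2 * Real.pi))) :
    (∀ k, 0 ≤ γ k) ∧ (∑ k, γ k = 1) ∧
      ∀ j : Fin (n + 1), ∑ k, γ k * canonVertex (n + 1) k j = θc j :=
  canonicalization_lands_in_canonical_simplex_general n θ hθmem S hS σ hσ θsnap hsnap τ hτ θc hθc γ
    hγ
end

section
/- For maps of the form h̃(x,y) = (f(x), f(y)) on ℝ² (identified with the Lie algebra of the maximal torus of SU(3), with z := −x−y), the Weyl-group average G = (1/6) Σ_k σ_k⁻¹ ∘ h̃ ∘ σ_k has Jacobian matrix J(G)(x,y) = (1/3)[[2f'(x)+f'(z), f'(z)−f'(y)], [f'(z)−f'(x), 2f'(y)+f'(z)]], whose determinant equals (1/3)(f'(x)f'(y) + f'(y)f'(z) + f'(z)f'(x)). -/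
open Matrix

/-- Lift a point of the Lie algebra of the diagonal torus of `SU(3)`
(coordinates `(x, y)` with `z = −x−y`) to its three coordinates. -/
noncomputable def weylCoords (θ : Fin 2 → ℝ) : Fin 3 → ℝ := ![θ 0, θ 1, -θ 0 - θ 1]

/-- The action of the Weyl group `S_3` on `ℝ²` by permuting `(x, y, z)`. -/
noncomputable def weylAct (σ : Equiv.Perm (Fin 3)) (θ : Fin 2 → ℝ) : Fin 2 → ℝ :=
  fun i => weylCoords θ (σ⁻¹ i.castSucc)

/-- The Weyl-group average `G = (1/6) Σ_k σ_k⁻¹ ∘ h̃ ∘ σ_k`. -/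
noncomputable def weylAverage (h : (Fin 2 → ℝ) → (Fin 2 → ℝ)) :
    (Fin 2 → ℝ) → (Fin 2 → ℝ) :=
  fun θ => (6 : ℝ)⁻¹ • ∑ σ : Equiv.Perm (Fin 3), weylAct σ⁻¹ (h (weylAct σ θ))

lemma sum_perm3 {M : Type*} [AddCommMonoid M] (g : Equiv.Perm (Fin 3) → M) :
    ∑ σ : Equiv.Perm (Fin 3), g σ =
      g 1 + g (Equiv.swap 0 1) + g (Equiv.swap 0 2) + g (Equiv.swap 1 2)
      + g (Equiv.swap 0 1 * Equiv.swap 1 2) + g (Equiv.swap 1 2 * Equiv.swap 0 1) := by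
  have h : (Finset.univ : Finset (Equiv.Perm (Fin 3))) =
      {1, Equiv.swap 0 1, Equiv.swap 0 2, Equiv.swap 1 2,
       Equiv.swap 0 1 * Equiv.swap 1 2, Equiv.swap 1 2 * Equiv.swap 0 1} := by decide
  rw [h]
  repeat rw [Finset.sum_insert (by decide)]
  rw [Finset.sum_singleton]; abel

lemma weylAverage_eq (f : ℝ → ℝ) :
    weylAverage (fun θ i => f (θ i)) = fun θ =>
      ![(3:ℝ)⁻¹ * (2*f (θ 0) - f (θ 1) - f (-θ 0 - θ 1)),
        (3:ℝ)⁻¹ * (2*f (θ 1) - f (θ 0) - f (-θ 0 - θ 1))] := by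
  funext θ i
  rw [weylAverage, sum_perm3]
  fin_cases i <;>
    simp [weylAct, weylCoords, Equiv.swap_apply_def] <;> ring

/-- For `h̃(x,y) = (f x, f y)` the Weyl-group average
`G = (1/6) Σ_k σ_k⁻¹ ∘ h̃ ∘ σ_k` has Jacobian matrix
`(1/3)[[2f'(x)+f'(z), f'(z)−f'(y)], [f'(z)−f'(x), 2f'(y)+f'(z)]]` (with
`z = −x−y`), whose determinant equals
`(1/3)(f'(x)f'(y) + f'(y)f'(z) + f'(z)f'(x))`. -/
theorem weylAverage_jacobian (f : ℝ → ℝ) (hf : Differentiable ℝ f)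
    (θ₀ : Fin 2 → ℝ) :
    HasFDerivAt (weylAverage (fun θ i => f (θ i)))
      (LinearMap.toContinuousLinearMap (Matrix.toLin'
        ((3 : ℝ)⁻¹ •
          !![2 * deriv f (θ₀ 0) + deriv f (-θ₀ 0 - θ₀ 1),
              deriv f (-θ₀ 0 - θ₀ 1) - deriv f (θ₀ 1);
            deriv f (-θ₀ 0 - θ₀ 1) - deriv f (θ₀ 0),
              2 * deriv f (θ₀ 1) + deriv f (-θ₀ 0 - θ₀ 1)]))) θ₀ ∧
    ((3 : ℝ)⁻¹ •
        !![2 * deriv f (θ₀ 0) + deriv f (-θ₀ 0 - θ₀ 1),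
            deriv f (-θ₀ 0 - θ₀ 1) - deriv f (θ₀ 1);
          deriv f (-θ₀ 0 - θ₀ 1) - deriv f (θ₀ 0),
            2 * deriv f (θ₀ 1) + deriv f (-θ₀ 0 - θ₀ 1)]).det =
      (3 : ℝ)⁻¹ * (deriv f (θ₀ 0) * deriv f (θ₀ 1) +
        deriv f (θ₀ 1) * deriv f (-θ₀ 0 - θ₀ 1) +
        deriv f (-θ₀ 0 - θ₀ 1) * deriv f (θ₀ 0)) := by
  constructor
  · rw [weylAverage_eq f, hasFDerivAt_pi']
    have h0 : HasFDerivAt (fun θ : Fin 2 → ℝ => f (θ 0))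
        (deriv f (θ₀ 0) • ContinuousLinearMap.proj (0 : Fin 2)) θ₀ :=
      HasDerivAt.comp_hasFDerivAt θ₀ ((hf (θ₀ 0)).hasDerivAt) (hasFDerivAt_apply (𝕜 := ℝ) (F' := fun _ : Fin 2 => ℝ) 0 θ₀)
    have h1 : HasFDerivAt (fun θ : Fin 2 → ℝ => f (θ 1))
        (deriv f (θ₀ 1) • ContinuousLinearMap.proj (1 : Fin 2)) θ₀ :=
      HasDerivAt.comp_hasFDerivAt θ₀ ((hf (θ₀ 1)).hasDerivAt) (hasFDerivAt_apply (𝕜 := ℝ) (F' := fun _ : Fin 2 => ℝ) 1 θ₀)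
    have hz : HasFDerivAt (fun θ : Fin 2 → ℝ => -θ 0 - θ 1)
        (-(ContinuousLinearMap.proj (0 : Fin 2)) - ContinuousLinearMap.proj (1 : Fin 2)) θ₀ :=
      ((hasFDerivAt_apply (𝕜 := ℝ) (F' := fun _ : Fin 2 => ℝ) 0 θ₀).neg).sub (hasFDerivAt_apply (𝕜 := ℝ) (F' := fun _ : Fin 2 => ℝ) 1 θ₀)
    have h2 : HasFDerivAt (fun θ : Fin 2 → ℝ => f (-θ 0 - θ 1))
        (deriv f (-θ₀ 0 - θ₀ 1) •
          (-(ContinuousLinearMap.proj (0 : Fin 2)) - ContinuousLinearMap.proj (1 : Fin 2))) θ₀ :=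
      HasDerivAt.comp_hasFDerivAt θ₀ ((hf (-θ₀ 0 - θ₀ 1)).hasDerivAt) hz
    intro i
    fin_cases i
    · refine ((((h0.const_mul 2).sub h1).sub h2).const_mul (3:ℝ)⁻¹).congr_fderiv ?_
      ext v
      simp [Matrix.toLin'_apply, Matrix.mulVec, dotProduct, Fin.sum_univ_two,
        Matrix.smul_apply]
      ring
    · refine ((((h1.const_mul 2).sub h0).sub h2).const_mul (3:ℝ)⁻¹).congr_fderiv ?_
      ext v
      simp [Matrix.toLin'_apply, Matrix.mulVec, dotProduct, Fin.sum_univ_two,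
        Matrix.smul_apply]
      ring
  · simp [Matrix.det_fin_two, Matrix.smul_apply]
    ring
end

section
/- If f : ℝ → ℝ is a diffeomorphism whose derivative is either everywhere strictly positive or everywhere strictly negative, then for h̃(x,y) = (f(x), f(y)) the Weyl-averaged map G = (1/6) Σ_k σ_k⁻¹ h̃ σ_k on ℝ² has everywhere nonvanishing Jacobian determinant (1/3)(f'(x)f'(y) + f'(y)f'(z) + f'(z)f'(x)) with z = −x−y, hence G is a local diffeomorphism; since ℝ² is simply connected, G is a diffeomorphism of ℝ². -/
open Matrix

/-! With `z = -x - y`, the Weyl average of `h̃` is `θ ↦ (f x - m, f y - m)`,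
`m = (f x + f y + f z) / 3`: the projection of `(f x, f y, f z)` onto the plane of
coordinate sum zero along `(1, 1, 1)`. For an increasing bijection `f`, the point `v` is
hit exactly at `θ = (f⁻¹ (v₀ + t), f⁻¹ (v₁ + t))` where `t` solves
`f⁻¹ (v₀ + t) + f⁻¹ (v₁ + t) + f⁻¹ (-v₀ - v₁ + t) = 0`, and the left side is a continuous
increasing bijection of `ℝ`; the decreasing case follows by replacing `f` with `-f`. The
Jacobian determinant `(f'(x) f'(y) + f'(y) f'(z) + f'(z) f'(x)) / 3` is positive, so the
inverse is `C¹` by the inverse function theorem. -/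

open Function Filter

theorem Function.Bijective.contDiff_invFun {𝕂 E F : Type*} [RCLike 𝕂]
    [NormedAddCommGroup E] [NormedSpace 𝕂 E] [CompleteSpace E]
    [NormedAddCommGroup F] [NormedSpace 𝕂 F] {f : E → F} {f' : E → E ≃L[𝕂] F}
    {n : WithTop ℕ∞} (hbij : Bijective f) (hf : ContDiff 𝕂 n f)
    (hf' : ∀ a, HasFDerivAt f (f' a : E →L[𝕂] F) a) (hn : n ≠ 0) :
    ContDiff 𝕂 n (invFun f) := by
  refine contDiff_iff_contDiffAt.2 fun y => ?_
  obtain ⟨a, rfl⟩ := hbij.surjective y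
  have ha : ContDiffAt 𝕂 n f a := hf.contDiffAt
  refine (ha.to_localInverse (hf' a) hn).congr_of_eventuallyEq ?_
  filter_upwards [(ha.hasStrictFDerivAt' (hf' a) hn).eventually_right_inverse] with y hy
  exact (congrArg (invFun f) hy).symm.trans (leftInverse_invFun hbij.injective _)

theorem StrictMono.eq_of_sub_eq_of_add_eq {f : ℝ → ℝ} (hf : StrictMono f)
    {a b c a' b' c' : ℝ} (hb : f a - f a' = f b - f b') (hc : f a - f a' = f c - f c')
    (hsum : a + b + c = a' + b' + c') : a = a' ∧ b = b' := by
  rcases lt_trichotomy a a' with h | rfl | h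
  · have hb' : b < b' := hf.lt_iff_lt.mp (by linarith [hf h])
    have hc' : c < c' := hf.lt_iff_lt.mp (by linarith [hf h])
    linarith
  · exact ⟨rfl, hf.injective (by linarith)⟩
  · have hb' : b' < b := hf.lt_iff_lt.mp (by linarith [hf h])
    have hc' : c' < c := hf.lt_iff_lt.mp (by linarith [hf h])
    linarith

noncomputable def centeredDiag (f : ℝ → ℝ) (θ : Fin 2 → ℝ) : Fin 2 → ℝ :=
  fun i => f (θ i) - (f (θ 0) + f (θ 1) + f (-θ 0 - θ 1)) / 3

theorem perm_fin_three_univ : (Finset.univ : Finset (Equiv.Perm (Fin 3))) =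
    {1, .swap 0 1, .swap 0 2, .swap 1 2, .swap 0 1 * .swap 1 2, .swap 0 2 * .swap 1 2} := by
  decide

theorem weylAverage_diag (f : ℝ → ℝ) :
    weylAverage (fun θ i => f (θ i)) = centeredDiag f := by
  funext θ i
  rw [weylAverage, perm_fin_three_univ, Finset.sum_insert (by decide),
    Finset.sum_insert (by decide), Finset.sum_insert (by decide), Finset.sum_insert (by decide),
    Finset.sum_insert (by decide), Finset.sum_singleton]
  fin_cases i <;>
    simp [centeredDiag, weylAct, weylCoords, Equiv.swap_apply_def, _root_.mul_inv_rev] <;> ring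

theorem centeredDiag_neg (f : ℝ → ℝ) : centeredDiag (-f) = -centeredDiag f := by
  funext θ i
  simp only [centeredDiag, Pi.neg_apply]
  ring

theorem centeredDiag_injective {f : ℝ → ℝ} (hf : StrictMono f) :
    Injective (centeredDiag f) := by
  intro θ θ' h
  have h0 := congrFun h 0
  have h1 := congrFun h 1
  simp only [centeredDiag] at h0 h1
  obtain ⟨e0, e1⟩ := hf.eq_of_sub_eq_of_add_eq (by linarith) (by linarith)
    (show θ 0 + θ 1 + (-θ 0 - θ 1) = θ' 0 + θ' 1 + (-θ' 0 - θ' 1) by ring)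
  funext i
  fin_cases i
  exacts [e0, e1]

theorem centeredDiag_surjective (e : ℝ ≃o ℝ) : Surjective (centeredDiag e) := by
  intro v
  set φ : ℝ → ℝ := fun t => e.symm (v 0 + t) + e.symm (v 1 + t) + e.symm (-v 0 - v 1 + t)
  have hφ : Surjective φ := by
    have hc : Continuous e.symm := e.symm.continuous
    have hT (c : ℝ) : Tendsto (fun t => e.symm (c + t)) atTop atTop :=
      e.symm.tendsto_atTop.comp (tendsto_atTop_add_const_left _ c tendsto_id)
    have hB (c : ℝ) : Tendsto (fun t => e.symm (c + t)) atBot atBot :=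
      e.symm.tendsto_atBot.comp (tendsto_atBot_add_const_left _ c tendsto_id)
    exact Continuous.surjective (by fun_prop)
      (((hT _).atTop_add_atTop (hT _)).atTop_add_atTop (hT _))
      (((hB _).atBot_add_atBot (hB _)).atBot_add_atBot (hB _))
  obtain ⟨t, ht⟩ := hφ 0
  refine ⟨![e.symm (v 0 + t), e.symm (v 1 + t)], ?_⟩
  have hz : -e.symm (v 0 + t) - e.symm (v 1 + t) = e.symm (-v 0 - v 1 + t) := by
    simp only [φ] at ht; linarith
  funext i
  fin_cases i <;>
    simp only [centeredDiag, Fin.zero_eta, Fin.mk_one, Fin.isValue, cons_val_zero, cons_val_one,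
      cons_val_fin_one, OrderIso.apply_symm_apply, hz] <;> ring

theorem centeredDiag_bijective_of_strictMono {f : ℝ → ℝ} (hf : StrictMono f)
    (hsurj : Surjective f) : Bijective (centeredDiag f) := by
  refine ⟨centeredDiag_injective hf, ?_⟩
  simpa using centeredDiag_surjective (hf.orderIsoOfSurjective f hsurj)

theorem centeredDiag_bijective_of_strictAnti {f : ℝ → ℝ} (hf : StrictAnti f)
    (hsurj : Surjective f) : Bijective (centeredDiag f) := by
  have h : Bijective (centeredDiag (-f)) :=
    centeredDiag_bijective_of_strictMono hf.neg (neg_surjective.comp hsurj)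
  rw [centeredDiag_neg] at h
  exact ((Equiv.neg _).comp_bijective _).1 h

noncomputable def centeredDiagFDeriv (f' : ℝ → ℝ) (θ : Fin 2 → ℝ) :
    (Fin 2 → ℝ) →L[ℝ] (Fin 2 → ℝ) :=
  .pi fun i => f' (θ i) • .proj i - (3 : ℝ)⁻¹ • (f' (θ 0) • .proj 0 + f' (θ 1) • .proj 1 +
    f' (-θ 0 - θ 1) • (-.proj 0 - .proj 1))

theorem hasFDerivAt_centeredDiag {f f' : ℝ → ℝ} (hf : ∀ x, HasDerivAt f (f' x) x)
    (θ : Fin 2 → ℝ) : HasFDerivAt (centeredDiag f) (centeredDiagFDeriv f' θ) θ := by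
  have hcoord (i : Fin 2) := (hf (θ i)).comp_hasFDerivAt θ (hasFDerivAt_apply (𝕜 := ℝ) i θ)
  have hz := (hf (-θ 0 - θ 1)).comp_hasFDerivAt θ
    ((hasFDerivAt_apply (𝕜 := ℝ) 0 θ).neg.sub (hasFDerivAt_apply 1 θ))
  refine hasFDerivAt_pi'' fun i => ?_
  simpa [centeredDiag, centeredDiagFDeriv, div_eq_inv_mul, comp_def, Pi.sub_def] using
    (hcoord i).sub ((((hcoord 0).add (hcoord 1)).add hz).const_mul (3 : ℝ)⁻¹)

theorem det_centeredDiagFDeriv (f' : ℝ → ℝ) (θ : Fin 2 → ℝ) :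
    (centeredDiagFDeriv f' θ).det = (3 : ℝ)⁻¹ * (f' (θ 0) * f' (θ 1) +
      f' (θ 1) * f' (-θ 0 - θ 1) + f' (-θ 0 - θ 1) * f' (θ 0)) := by
  rw [ContinuousLinearMap.det, ← LinearMap.det_toMatrix', Matrix.det_fin_two]
  simp [LinearMap.toMatrix'_apply, centeredDiagFDeriv]
  ring

theorem contDiff_centeredDiag {f : ℝ → ℝ} {n : WithTop ℕ∞} (hf : ContDiff ℝ n f) :
    ContDiff ℝ n (centeredDiag f) := by
  unfold centeredDiag
  fun_prop

/-- If `f : ℝ → ℝ` is a diffeomorphism whose derivative is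
everywhere strictly positive or everywhere strictly negative, then for
`h̃(x,y) = (f x, f y)` the Weyl-averaged map `G` has everywhere nonvanishing
Jacobian determinant `(1/3)(f'(x)f'(y) + f'(y)f'(z) + f'(z)f'(x))` (with
`z = −x−y`), hence is a local diffeomorphism; since `ℝ²` is simply connected,
`G` is a diffeomorphism of `ℝ²`. -/
theorem weylAverage_is_diffeomorphism (f : ℝ → ℝ)
    (hf : ContDiff ℝ 1 f) (hbij : Function.Bijective f)
    (hf' : (∀ x, 0 < deriv f x) ∨ (∀ x, deriv f x < 0)) :
    (∀ θ : Fin 2 → ℝ,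
      (3 : ℝ)⁻¹ * (deriv f (θ 0) * deriv f (θ 1) +
        deriv f (θ 1) * deriv f (-θ 0 - θ 1) +
        deriv f (-θ 0 - θ 1) * deriv f (θ 0)) ≠ 0) ∧
    Function.Bijective (weylAverage (fun θ i => f (θ i))) ∧
    ContDiff ℝ 1 (weylAverage (fun θ i => f (θ i))) ∧
    ContDiff ℝ 1 (Function.invFun (weylAverage (fun θ i => f (θ i)))) := by
  have hderiv (x : ℝ) : HasDerivAt f (deriv f x) x := (hf.differentiable one_ne_zero x).hasDerivAt
  have hprod (x y : ℝ) : 0 < deriv f x * deriv f y := by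
    rcases hf' with h | h
    exacts [mul_pos (h x) (h y), mul_pos_of_neg_of_neg (h x) (h y)]
  have hdet (θ : Fin 2 → ℝ) : (centeredDiagFDeriv (deriv f) θ).det ≠ 0 := by
    rw [det_centeredDiagFDeriv]
    exact (mul_pos (by norm_num) (add_pos (add_pos (hprod (θ 0) (θ 1))
      (hprod (θ 1) (-θ 0 - θ 1))) (hprod (-θ 0 - θ 1) (θ 0)))).ne'
  have hG : Bijective (centeredDiag f) := by
    rcases hf' with h | h
    exacts [centeredDiag_bijective_of_strictMono (strictMono_of_deriv_pos h) hbij.2,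
      centeredDiag_bijective_of_strictAnti (strictAnti_of_deriv_neg h) hbij.2]
  rw [weylAverage_diag]
  refine ⟨fun θ => det_centeredDiagFDeriv (deriv f) θ ▸ hdet θ, hG, contDiff_centeredDiag hf,
    hG.contDiff_invFun (contDiff_centeredDiag hf)
      (f' := fun θ => (centeredDiagFDeriv _ θ).toContinuousLinearEquivOfDetNeZero (hdet θ))
      (fun θ => ?_) one_ne_zero⟩
  simpa using hasFDerivAt_centeredDiag hderiv θ
end
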